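/- Let V be a finite-dimensional vector space over a field, let N : V → V satisfy N^{d+1} = 0, and suppose there are linear maps β : V → W, ρ : W → U, γ : U → V between finite-dimensional spaces with N^d = γ ∘ ρ ∘ β, where β is surjective, ρ is bijective, dim(im γ) = μ and dim V = (d+1)μ. Then rank(N^d) = μ, and consequently im(N^r) = ker(N^{d+1−r}) with dim im(N^r) = (d+1−r)μ for all 0 ≤ r ≤ d+1. -/
import Mathlib

open Module LinearMap

private lemma rank_step {K V : Type*} [Field K] [AddCommGroup V] [Module K V]
    [FiniteDimensional K V] (N : V →ₗ[K] V) (i : ℕ) :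
    finrank K (LinearMap.range (N ^ i)) =
      finrank K (LinearMap.range (N ^ (i+1))) +
      finrank K (LinearMap.ker N ⊓ LinearMap.range (N ^ i) : Submodule K V) := by
  have h := LinearMap.finrank_range_add_finrank_ker (N.domRestrict (LinearMap.range (N ^ i)))
  rw [LinearMap.range_domRestrict, LinearMap.ker_domRestrict] at h
  have h1 : Submodule.map N (LinearMap.range (N ^ i)) = LinearMap.range (N ^ (i+1)) := by
    rw [pow_succ', Module.End.mul_eq_comp, LinearMap.range_comp]
  have h2 : finrank K ((LinearMap.ker N).comap (LinearMap.range (N ^ i)).subtype) =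
      finrank K (LinearMap.ker N ⊓ LinearMap.range (N ^ i) : Submodule K V) := by
    have e : (LinearMap.ker N).comap (LinearMap.range (N ^ i)).subtype =
        (LinearMap.ker N ⊓ LinearMap.range (N ^ i)).comap (LinearMap.range (N ^ i)).subtype := by
      simp [Submodule.comap_inf]
    rw [e]
    exact (Submodule.comapSubtypeEquivOfLe inf_le_right).finrank_eq
  rw [h1, h2] at h
  omega

theorem stmt14 {K V W U : Type*} [Field K]
    [AddCommGroup V] [Module K V] [FiniteDimensional K V]
    [AddCommGroup W] [Module K W] [FiniteDimensional K W]
    [AddCommGroup U] [Module K U] [FiniteDimensional K U]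
    (d μ : ℕ) (N : V →ₗ[K] V) (hN : N ^ (d + 1) = 0)
    (β : V →ₗ[K] W) (ρ : W →ₗ[K] U) (γ : U →ₗ[K] V)
    (hβ : Function.Surjective β) (hρ : Function.Bijective ρ)
    (hfac : N ^ d = γ ∘ₗ ρ ∘ₗ β)
    (hγ : Module.finrank K (LinearMap.range γ) = μ)
    (hdim : Module.finrank K V = (d + 1) * μ) :
    Module.finrank K (LinearMap.range (N ^ d)) = μ ∧
      ∀ r ≤ d + 1,
        LinearMap.range (N ^ r) = LinearMap.ker (N ^ (d + 1 - r)) ∧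
        Module.finrank K (LinearMap.range (N ^ r)) = (d + 1 - r) * μ := by
  set f : ℕ → ℕ := fun i => finrank K (LinearMap.range (N ^ i)) with hfdef
  set g : ℕ → ℕ := fun i =>
    finrank K (LinearMap.ker N ⊓ LinearMap.range (N ^ i) : Submodule K V) with hgdef
  have hfd : f d = μ := by
    have hrange : LinearMap.range (N ^ d) = LinearMap.range γ := by
      rw [hfac, LinearMap.range_comp, LinearMap.range_comp,
        LinearMap.range_eq_top.mpr hβ, Submodule.map_top,
        LinearMap.range_eq_top.mpr hρ.2, Submodule.map_top]
    show finrank K (LinearMap.range (N ^ d)) = μ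
    rw [hrange]; exact hγ
  have hstep : ∀ i, f i = f (i + 1) + g i := fun i => rank_step N i
  have hganti : ∀ i j, i ≤ j → g j ≤ g i := by
    intro i j hij
    apply Submodule.finrank_mono
    apply inf_le_inf_left
    intro x hx
    obtain ⟨y, rfl⟩ := hx
    obtain ⟨k, rfl⟩ : ∃ k, j = i + k := ⟨j - i, by omega⟩
    rw [pow_add]
    exact ⟨(N ^ k) y, rfl⟩
  have hfd1 : f (d + 1) = 0 := by
    show finrank K (LinearMap.range (N ^ (d + 1))) = 0
    rw [hN, LinearMap.range_zero]
    exact finrank_bot K V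
  have hgd : g d = μ := by have := hstep d; omega
  have hgge : ∀ i ≤ d, μ ≤ g i := fun i hi => hgd ▸ hganti i d hi
  have hf0 : f 0 = (d + 1) * μ := by
    show finrank K (LinearMap.range (N ^ 0)) = (d + 1) * μ
    rw [pow_zero, Module.End.one_eq_id, LinearMap.range_id, ← hdim]
    exact finrank_top K V
  -- lower bound by downward induction
  have hlb : ∀ j ≤ d + 1, j * μ ≤ f (d + 1 - j) := by
    intro j hj
    induction j with
    | zero => omega
    | succ k ih =>
      have hk := ih (by omega)
      have hi : d + 1 - (k + 1) = (d - k) := by omega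
      have := hstep (d - k)
      have h2 : μ ≤ g (d - k) := hgge _ (by omega)
      have h3 : d - k + 1 = d + 1 - k := by omega
      rw [hi]
      rw [h3] at this
      calc (k + 1) * μ = k * μ + μ := by ring
        _ ≤ f (d + 1 - k) + μ := by omega
        _ ≤ f (d - k) := by omega
  -- upper bound by induction
  have hub : ∀ r ≤ d + 1, f r + r * μ ≤ (d + 1) * μ := by
    intro r hr
    induction r with
    | zero => omega
    | succ k ih =>
      have hk := ih (by omega)
      have := hstep k
      have h2 : μ ≤ g k := hgge k (by omega)
      have : f (k + 1) + μ ≤ f k := by omega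
      calc f (k + 1) + (k + 1) * μ = f (k + 1) + μ + k * μ := by ring
        _ ≤ f k + k * μ := by omega
        _ ≤ (d + 1) * μ := hk
  have hfr : ∀ r ≤ d + 1, f r = (d + 1 - r) * μ := by
    intro r hr
    have h1 := hlb (d + 1 - r) (by omega)
    have h2 := hub r hr
    have h3 : d + 1 - (d + 1 - r) = r := by omega
    rw [h3] at h1
    have h4 : (d + 1 - r) * μ + r * μ = (d + 1) * μ := by
      have : (d + 1 - r) + r = d + 1 := by omega
      calc (d + 1 - r) * μ + r * μ = ((d + 1 - r) + r) * μ := by ring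
        _ = (d + 1) * μ := by rw [this]
    omega
  refine ⟨hfd, ?_⟩
  intro r hr
  have hfrr := hfr r hr
  have hle : LinearMap.range (N ^ r) ≤ LinearMap.ker (N ^ (d + 1 - r)) := by
    rintro x ⟨y, rfl⟩
    have : (N ^ (d + 1 - r)) ((N ^ r) y) = (N ^ (d + 1 - r + r)) y := by
      rw [pow_add]; rfl
    rw [LinearMap.mem_ker, this]
    have h5 : d + 1 - r + r = d + 1 := by omega
    rw [h5, hN]
    rfl
  have hkerdim : finrank K (LinearMap.ker (N ^ (d + 1 - r))) = (d + 1 - r) * μ := by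
    have h := LinearMap.finrank_range_add_finrank_ker (N ^ (d + 1 - r))
    have h6 := hfr (d + 1 - r) (by omega)
    have h7 : d + 1 - (d + 1 - r) = r := by omega
    rw [h7] at h6
    rw [hdim] at h
    have h8 : r * μ + (d + 1 - r) * μ = (d + 1) * μ := by
      have : r + (d + 1 - r) = d + 1 := by omega
      calc r * μ + (d + 1 - r) * μ = (r + (d + 1 - r)) * μ := by ring
        _ = (d + 1) * μ := by rw [this]
    have h9 : finrank K (LinearMap.range (N ^ (d + 1 - r))) = r * μ := h6
    omega
  refine ⟨Submodule.eq_of_le_of_finrank_le hle ?_, hfrr⟩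
  rw [hkerdim]
  exact le_of_eq hfrr.symm
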